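/- Let a be a natural number congruent to 5 modulo 20 with a > 5, and let n = v_2(a-1). Define T(1) = a, T(b+1) = a^(T(b)). Then for every b ≥ 2, T(b+1) ≡ T(b) (mod 10^{(b+1)·n}). -/

import Mathlib

private lemma aux_mul_le_pow (a : ℕ) (ha : 2 ≤ a) :
    ∀ m, 1 ≤ m → a * m ≤ a ^ m := by
  intro m hm
  induction m with
  | zero => omega
  | succ m ih =>
    rcases Nat.eq_or_lt_of_le hm with h | h
    · have : m = 0 := by omega
      subst this; simp
    · have hm1 : 1 ≤ m := by omega
      have h1 := ih hm1
      have h2 : m + 1 ≤ a * m := by nlinarith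
      calc a * (m + 1) ≤ a * (a * m) := Nat.mul_le_mul_left a h2
        _ ≤ a * a ^ m := Nat.mul_le_mul_left a h1
        _ = a ^ (m + 1) := by ring

private lemma aux_three_mul_le (m : ℕ) : 3 * (m + 9) ≤ 2 ^ (m + 9) := by
  induction m with
  | zero => norm_num
  | succ m ih =>
    have h3 : (3 : ℕ) ≤ 2 ^ (m + 9) := le_trans (by omega) ih
    have he : (2:ℕ) ^ (m + 1 + 9) = 2 ^ (m + 9) * 2 := by
      rw [show m + 1 + 9 = (m + 9) + 1 by omega, pow_succ]
    rw [he]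
    omega

private lemma aux_two_pow_dvd (a n : ℕ) (hodd : a % 2 = 1) (ha1 : 1 ≤ a)
    (hdvd : 2 ^ n ∣ a - 1) :
    ∀ k m, 2 ^ k ∣ m → 2 ^ (n + k) ∣ a ^ m - 1 := by
  intro k
  induction k with
  | zero =>
    intro m _
    have h := Nat.sub_dvd_pow_sub_pow a 1 m
    simp only [one_pow] at h
    simpa using dvd_trans hdvd h
  | succ k ih =>
    intro m hm
    obtain ⟨m', rfl⟩ := hm
    have hm'dvd : 2 ^ k ∣ 2 ^ k * m' := Dvd.intro m' rfl
    have h1 := ih (2 ^ k * m') hm'dvd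
    have hx : 1 ≤ a ^ (2 ^ k * m') := Nat.one_le_pow _ _ (by omega)
    have hexp : a ^ (2 ^ (k + 1) * m') = (a ^ (2 ^ k * m')) ^ 2 := by
      rw [← pow_mul]
      ring_nf
    have hodd2 : a ^ (2 ^ k * m') % 2 = 1 :=
      Nat.odd_iff.mp (Odd.pow (Nat.odd_iff.mpr hodd))
    have hfac : a ^ (2 ^ (k + 1) * m') - 1 =
        (a ^ (2 ^ k * m') - 1) * (a ^ (2 ^ k * m') + 1) := by
      rw [hexp]
      obtain ⟨y, hy⟩ := Nat.exists_eq_add_of_le hx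
      rw [hy]
      have h : (1 + y) ^ 2 = (1 + y - 1) * (1 + y + 1) + 1 := by
        have h2 : (1:ℕ) + y - 1 = y := by omega
        rw [h2]; ring
      omega
    rw [hfac]
    have h2 : 2 ∣ a ^ (2 ^ k * m') + 1 := by omega
    have : 2 ^ (n + k) * 2 ∣ (a ^ (2 ^ k * m') - 1) * (a ^ (2 ^ k * m') + 1) :=
      mul_dvd_mul h1 h2
    calc 2 ^ (n + (k + 1)) = 2 ^ (n + k) * 2 := by ring
      _ ∣ _ := this

theorem stmt12 (a : ℕ) (ha : a % 20 = 5) (ha5 : 5 < a)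
    (n : ℕ) (hn : n = padicValNat 2 (a - 1))
    (T : ℕ → ℕ) (hT1 : T 1 = a) (hT : ∀ b, T (b + 1) = a ^ T b) :
    ∀ b, 2 ≤ b → T (b + 1) ≡ T b [MOD 10 ^ ((b + 1) * n)] := by
  have ha25 : 25 ≤ a := by omega
  have hodd : a % 2 = 1 := by omega
  have h5a : 5 ∣ a := by omega
  have ha2 : 2 ≤ a := by omega
  have hdvd : 2 ^ n ∣ a - 1 := by
    rw [hn]; exact pow_padicValNat_dvd
  have h2na : 2 ^ n ≤ a - 1 := Nat.le_of_dvd (by omega) hdvd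
  have h3n : 3 * n ≤ a := by
    by_cases hc : n ≤ 8
    · omega
    · have : 3 * n ≤ 2 ^ n := by
        have := aux_three_mul_le (n - 9)
        have h9 : n - 9 + 9 = n := by omega
        rwa [h9] at this
      omega
  -- positivity of T
  have hTpos : ∀ b, 1 ≤ T b := by
    intro b
    cases b with
    | zero =>
      cases' Nat.eq_zero_or_pos (T 0) with h h
      · have := hT 0
        rw [h] at this
        rw [hT1] at this
        simp at this
        omega
      · exact h
    | succ b =>
      rw [hT b]
      exact Nat.one_le_pow _ _ (by omega)
  -- Lemma A: growth of T
  have hA : ∀ b, 1 ≤ b → (b + 2) * n ≤ T b := by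
    intro b hb
    induction b with
    | zero => omega
    | succ b ih =>
      rcases Nat.eq_or_lt_of_le hb with h | h
      · rw [← h]
        rw [show T 1 = a from hT1]
        omega
      · have hb1 : 1 ≤ b := by omega
        have h1 := ih hb1
        rw [hT b]
        have h2 : a * T b ≤ a ^ T b := aux_mul_le_pow a ha2 (T b) (hTpos b)
        have s1 : (b + 1 + 2) * n ≤ (2 * (b + 2)) * n :=
          Nat.mul_le_mul_right n (by omega)
        have s2 : (2 * (b + 2)) * n = 2 * ((b + 2) * n) := by ring
        have s3 : 2 * ((b + 2) * n) ≤ a * T b := Nat.mul_le_mul ha2 h1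
        omega
  have hmono : ∀ b, 1 ≤ b → T b ≤ T (b + 1) := by
    intro b hb
    rw [hT b]
    exact le_of_lt (Nat.lt_pow_self (n := T b) (by omega))
  -- Lemma B: 2-adic divisibility
  have hB : ∀ b, 1 ≤ b → 2 ^ ((b + 1) * n) ∣ T (b + 1) - T b := by
    intro b hb
    induction b with
    | zero => omega
    | succ b ih =>
      rcases Nat.eq_or_lt_of_le hb with h | h
      · rw [← h]
        rw [hT 1, hT1]
        have hfac : a ^ a - a = a * (a ^ (a - 1) - 1) := by
          rw [Nat.mul_sub, mul_one, ← pow_succ']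
          congr 2
          omega
        rw [hfac]
        have h1 : 2 ^ (n + n) ∣ a ^ (a - 1) - 1 :=
          aux_two_pow_dvd a n hodd (by omega) hdvd n (a - 1) hdvd
        have heq : (1 + 1) * n = n + n := by ring
        rw [heq]
        exact Dvd.dvd.mul_left h1 a
      · have hb1 : 1 ≤ b := by omega
        have ihb := ih hb1
        have hm := hmono b hb1
        have key : T (b + 1 + 1) - T (b + 1) = a ^ T b * (a ^ (T (b + 1) - T b) - 1) := by
          rw [hT (b + 1), Nat.mul_sub, mul_one, ← pow_add,
            Nat.add_sub_cancel' hm, hT b]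
        rw [key]
        have h1 : 2 ^ (n + (b + 1) * n) ∣ a ^ (T (b + 1) - T b) - 1 :=
          aux_two_pow_dvd a n hodd (by omega) hdvd ((b + 1) * n) (T (b + 1) - T b) ihb
        have heq : (b + 1 + 1) * n = n + (b + 1) * n := by ring
        rw [heq]
        exact Dvd.dvd.mul_left h1 _
  -- 5-adic divisibility
  have h5 : ∀ b, 2 ≤ b → 5 ^ ((b + 1) * n) ∣ T b := by
    intro b hb
    obtain ⟨c, rfl⟩ : ∃ c, b = c + 1 := ⟨b - 1, by omega⟩
    have hc1 : 1 ≤ c := by omega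
    rw [hT c]
    have h1 : 5 ^ (T c) ∣ a ^ (T c) := pow_dvd_pow_of_dvd h5a _
    have h2 : (c + 1 + 1) * n ≤ T c := by
      have := hA c hc1
      linarith
    exact dvd_trans (pow_dvd_pow 5 h2) h1
  -- conclude
  intro b hb
  have hm := hmono b (by omega)
  have h2part : 2 ^ ((b + 1) * n) ∣ T (b + 1) - T b := hB b (by omega)
  have h5part : 5 ^ ((b + 1) * n) ∣ T (b + 1) - T b := by
    have hb1 := h5 (b + 1) (by omega)
    have hb2 := h5 b hb
    have hTb1 : 5 ^ ((b + 1) * n) ∣ T (b + 1) := by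
      refine dvd_trans (pow_dvd_pow 5 ?_) hb1
      exact Nat.mul_le_mul_right n (by omega)
    exact Nat.dvd_sub hTb1 hb2
  have hcop : Nat.Coprime (2 ^ ((b + 1) * n)) (5 ^ ((b + 1) * n)) :=
    Nat.Coprime.pow _ _ (by norm_num)
  have hdvd10 : 10 ^ ((b + 1) * n) ∣ T (b + 1) - T b := by
    have h10 : (10 : ℕ) ^ ((b + 1) * n) = 2 ^ ((b + 1) * n) * 5 ^ ((b + 1) * n) := by
      rw [show (10 : ℕ) = 2 * 5 by norm_num, mul_pow]
    rw [h10]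
    exact Nat.Coprime.mul_dvd_of_dvd_of_dvd hcop h2part h5part
  exact ((Nat.modEq_iff_dvd' hm).mpr hdvd10).symm
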